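/- arXiv:1701.03363 — 7 statements merged into one kernel-verified Lean document; each statement's English description precedes it below -/
import Mathlib

section
/- Let n > 2 be even. If a graph G on n vertices is the union of n/2 - 1 pairwise edge-disjoint perfect matchings and G is disconnected, then G is the disjoint union of two complete graphs each on n/2 vertices. -/
/-!
Every vertex has exactly one partner in each of the `n/2 - 1` edge-disjoint perfect matchings, so
`G` is `(n/2 - 1)`-regular. A connected component contains a vertex together with its neighbours,
hence has at least `n/2` vertices; two disjoint components of a disconnected `G` therefore exhaust
the `n` vertices and have exactly `n/2` vertices each. In a component of size `degree + 1` every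
vertex is adjacent to all the others, so both components are complete.
-/

open Finset

namespace SimpleGraph

theorem isRegularOfDegree_iSup_of_pairwise_disjoint {V ι : Type*} [Fintype ι]
    {M : ι → SimpleGraph V} (hpm : ∀ i v, ∃! w, (M i).Adj v w)
    (hdisj : Pairwise fun i j => Disjoint (M i) (M j)) [(⨆ i, M i).LocallyFinite] :
    (⨆ i, M i).IsRegularOfDegree (Fintype.card ι) := by
  intro v
  choose partner hpartner hunique using hpm
  rw [← card_neighborSet_eq_degree]
  refine (Fintype.card_of_bijective (f := fun i => ⟨partner i v, iSup_adj.mpr ⟨i, hpartner i v⟩⟩)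
    ⟨fun i j hij => ?_, fun ⟨w, hw⟩ => ?_⟩).symm
  · by_contra hne
    have hj : (M j).Adj v (partner i v) := by
      rw [show partner i v = partner j v from congrArg Subtype.val hij]
      exact hpartner j v
    exact disjoint_left.mp (hdisj hne) _ _ (hpartner i v) hj
  · obtain ⟨i, hi⟩ := iSup_adj.mp hw
    exact ⟨i, Subtype.ext (hunique i v w hi).symm⟩

variable {V : Type*} [Fintype V] [DecidableEq V] {G : SimpleGraph V} [DecidableRel G.Adj]

theorem insert_neighborFinset_subset_filter_reachable (v : V) :
    insert v (G.neighborFinset v) ⊆ ({w | G.Reachable v w} : Finset V) := by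
  intro w hw
  rcases mem_insert.mp hw with rfl | hadj
  · simp
  · simpa using ((mem_neighborFinset _ _ _).mp hadj).reachable

theorem degree_add_one_le_card_filter_reachable (v : V) :
    G.degree v + 1 ≤ #{w | G.Reachable v w} := by
  simpa [card_insert_of_notMem] using card_le_card (insert_neighborFinset_subset_filter_reachable v)

theorem Reachable.adj_of_card_filter_reachable_le {v w : V} (hvw : G.Reachable v w) (hne : v ≠ w)
    (hcard : #{x | G.Reachable v x} ≤ G.degree v + 1) : G.Adj v w := by
  have hclosed : insert v (G.neighborFinset v) = ({x | G.Reachable v x} : Finset V) :=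
    eq_of_subset_of_card_le (insert_neighborFinset_subset_filter_reachable v)
      (by simpa [card_insert_of_notMem] using hcard)
  have hw : w ∈ insert v (G.neighborFinset v) := by simpa [hclosed] using hvw
  simpa [hne.symm] using hw

theorem Reachable.filter_reachable_eq {u v : V} (huv : G.Reachable u v) :
    ({w | G.Reachable u w} : Finset V) = ({w | G.Reachable v w} : Finset V) := by
  ext w
  simpa using ⟨huv.symm.trans, huv.trans⟩

theorem disjoint_filter_reachable {a b : V} (hab : ¬ G.Reachable a b) :
    Disjoint ({w | G.Reachable a w} : Finset V) ({w | G.Reachable b w} : Finset V) :=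
  Finset.disjoint_left.mpr fun w hwa hwb => hab <| by
    simp only [mem_filter, mem_univ, true_and] at hwa hwb
    exact hwa.trans hwb.symm

theorem card_filter_reachable_add_card_filter_reachable_le {a b : V} (hab : ¬ G.Reachable a b) :
    #{w | G.Reachable a w} + #{w | G.Reachable b w} ≤ Fintype.card V :=
  card_union_of_disjoint (disjoint_filter_reachable hab) ▸ card_le_univ _

theorem reachable_or_reachable_of_card_filter_reachable_add {a b : V} (hab : ¬ G.Reachable a b)
    (hcard : #{w | G.Reachable a w} + #{w | G.Reachable b w} = Fintype.card V) (w : V) :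
    G.Reachable a w ∨ G.Reachable b w := by
  have hunion : ({w | G.Reachable a w} : Finset V) ∪ ({w | G.Reachable b w} : Finset V) = univ :=
    eq_univ_of_card _ (by rw [card_union_of_disjoint (disjoint_filter_reachable hab), hcard])
  have hw := mem_univ w
  rw [← hunion] at hw
  simpa using hw

theorem IsRegularOfDegree.exists_finset_adj_iff_of_not_connected {d : ℕ}
    (hG : G.IsRegularOfDegree d) (hcard : Fintype.card V = 2 * (d + 1)) (hconn : ¬ G.Connected) :
    ∃ S : Finset V, #S = d + 1 ∧ ∀ u v, u ≠ v → (G.Adj u v ↔ (u ∈ S ↔ v ∈ S)) := by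
  obtain ⟨a⟩ : Nonempty V := Fintype.card_pos_iff.mp (by omega)
  obtain ⟨b, hab⟩ : ∃ b, ¬ G.Reachable a b := by
    by_contra! h
    exact hconn ((connected_iff_exists_forall_reachable G).mpr ⟨a, h⟩)
  have hA := hG.degree_eq a ▸ degree_add_one_le_card_filter_reachable a
  have hB := hG.degree_eq b ▸ degree_add_one_le_card_filter_reachable b
  have hsum := card_filter_reachable_add_card_filter_reachable_le hab
  have hcover := reachable_or_reachable_of_card_filter_reachable_add hab (by omega)
  have hcomponent : ∀ u, #{w | G.Reachable u w} = d + 1 := fun u => by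
    rcases hcover u with hu | hu <;> rw [← hu.filter_reachable_eq] <;> omega
  have hclique : ∀ u v, u ≠ v → G.Reachable u v → G.Adj u v := fun u v hne huv =>
    huv.adj_of_card_filter_reachable_le hne (by rw [hcomponent, hG.degree_eq])
  refine ⟨({w | G.Reachable a w} : Finset V), hcomponent a, fun u v hne => ?_⟩
  simp only [mem_filter, mem_univ, true_and]
  refine ⟨fun h => ⟨fun hu => hu.trans h.reachable, fun hv => hv.trans h.reachable.symm⟩,
    fun h => hclique u v hne ?_⟩
  by_cases hu : G.Reachable a u
  · exact hu.symm.trans (h.mp hu)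
  · have hv : ¬ G.Reachable a v := mt h.mpr hu
    exact ((hcover u).resolve_left hu).symm.trans ((hcover v).resolve_left hv)

end SimpleGraph

theorem stmt4 (n : ℕ) (hn : 2 < n) (heven : Even n)
    (M : Fin (n / 2 - 1) → SimpleGraph (Fin n))
    (hpm : ∀ i, ∀ v, ∃! w, (M i).Adj v w)
    (hdisj : Pairwise fun i j => Disjoint (M i) (M j))
    (G : SimpleGraph (Fin n)) (hG : G = ⨆ i, M i)
    (hconn : ¬ G.Connected) :
    ∃ S : Finset (Fin n), S.card = n / 2 ∧
      ∀ u v : Fin n, u ≠ v → (G.Adj u v ↔ (u ∈ S ↔ v ∈ S)) := by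
  classical
  subst hG
  have hreg := SimpleGraph.isRegularOfDegree_iSup_of_pairwise_disjoint hpm hdisj
  rw [Fintype.card_fin] at hreg
  have hcard : Fintype.card (Fin n) = 2 * (n / 2 - 1 + 1) := by
    rw [Fintype.card_fin]; have := Nat.even_iff.mp heven; omega
  obtain ⟨S, hS, hadj⟩ := hreg.exists_finset_adj_iff_of_not_connected hcard hconn
  exact ⟨S, by omega, hadj⟩
end

section
/- Let n > 2 be even. If a graph G on n vertices is the union of n/2 pairwise edge-disjoint perfect matchings and G is bipartite, then G is the complete bipartite graph K_{n/2,n/2}. -/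
/-!
A union of `k` pairwise edge-disjoint perfect matchings is `k`-regular, since a vertex has
distinct partners in distinct matchings. In a bipartite `k`-regular graph with `k > 0`, double
counting the edges shows that the two colour classes have the same size, here `n / 2 = k`. The
`k` neighbours of a vertex all lie in the opposite class, so they exhaust it.
-/

open Finset

namespace SimpleGraph

variable {V : Type*}

theorem Coloring.eq_not_of_adj {G : SimpleGraph V} (C : G.Coloring Bool) {v w : V}
    (h : G.Adj v w) : C w = !C v :=
  Bool.eq_not_iff.mpr (C.valid h).symm

variable [Fintype V]

theorem isRegularOfDegree_iSup_of_existsUnique {ι : Type*} [Fintype ι] [DecidableEq V]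
    {M : ι → SimpleGraph V} [DecidableRel (⨆ i, M i).Adj]
    (hpm : ∀ i v, ∃! w, (M i).Adj v w) (hdisj : Pairwise fun i j => Disjoint (M i) (M j)) :
    (⨆ i, M i).IsRegularOfDegree (Fintype.card ι) := by
  choose f hf using hpm
  intro v
  have hinj : Function.Injective (f · v) := by
    intro i j (hij : f i v = f j v)
    by_contra hne
    exact disjoint_left.mp (hdisj hne) v (f j v) (hij ▸ (hf i v).1) (hf j v).1
  have hnbr : (⨆ i, M i).neighborFinset v = univ.image (f · v) := by
    ext w
    simp only [mem_neighborFinset, iSup_adj, mem_image, mem_univ, true_and]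
    exact ⟨fun ⟨i, h⟩ => ⟨i, ((hf i v).2 w h).symm⟩, fun ⟨i, h⟩ => ⟨i, h ▸ (hf i v).1⟩⟩
  rw [← card_neighborFinset_eq_degree, hnbr, card_image_of_injective _ hinj, card_univ]

variable {G : SimpleGraph V} [DecidableRel G.Adj] {k : ℕ}

theorem Coloring.neighborFinset_subset_filter_eq_not (C : G.Coloring Bool) (v : V) :
    G.neighborFinset v ⊆ univ.filter (C · = !C v) := fun w hw =>
  mem_filter.mpr ⟨mem_univ w, C.eq_not_of_adj ((mem_neighborFinset G v w).mp hw)⟩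

theorem Coloring.filter_adj_filter_eq_not (C : G.Coloring Bool) (v : V) :
    (univ.filter (C · = !C v)).filter (G.Adj v) = G.neighborFinset v := by
  ext w
  simp only [mem_filter, mem_univ, true_and, mem_neighborFinset, and_iff_right_iff_imp]
  exact C.eq_not_of_adj

theorem IsRegularOfDegree.card_filter_coloring_eq (hG : G.IsRegularOfDegree k)
    (hk : 0 < k) (C : G.Coloring Bool) (b : Bool) :
    #(univ.filter (C · = b)) = #(univ.filter (C · = !b)) := by
  refine Nat.eq_of_mul_eq_mul_right hk (card_mul_eq_card_mul G.Adj (m := k) (n := k) ?_ ?_)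
  · intro v hv
    rw [← (mem_filter.mp hv).2, bipartiteAbove, C.filter_adj_filter_eq_not,
      card_neighborFinset_eq_degree, hG.degree_eq]
  · intro v hv
    have hb : b = !C v := by rw [(mem_filter.mp hv).2, Bool.not_not]
    simp only [bipartiteBelow, hb, adj_comm _ _ v]
    rw [C.filter_adj_filter_eq_not, card_neighborFinset_eq_degree, hG.degree_eq]

theorem IsRegularOfDegree.card_filter_coloring_eq_half (hG : G.IsRegularOfDegree k)
    (hk : 0 < k) (C : G.Coloring Bool) (b : Bool) :
    #(univ.filter (C · = b)) = Fintype.card V / 2 := by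
  have hsum := card_filter_add_card_filter_not (s := univ) (C · = b)
  simp_rw [← ne_eq, ← Bool.eq_not_iff, ← hG.card_filter_coloring_eq hk C b, card_univ] at hsum
  omega

theorem IsRegularOfDegree.adj_iff_coloring_ne (hG : G.IsRegularOfDegree (Fintype.card V / 2))
    (hV : 0 < Fintype.card V / 2) (C : G.Coloring Bool) {v w : V} : G.Adj v w ↔ C v ≠ C w := by
  have hnbr : G.neighborFinset v = univ.filter (C · = !C v) := by
    refine eq_of_subset_of_card_le (C.neighborFinset_subset_filter_eq_not v) ?_
    rw [card_neighborFinset_eq_degree, hG.degree_eq, hG.card_filter_coloring_eq_half hV]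
  rw [← mem_neighborFinset, hnbr, mem_filter, Bool.eq_not_iff, ne_comm]
  exact and_iff_right (mem_univ w)

end SimpleGraph

open SimpleGraph in
theorem stmt7_general (n : ℕ) (hn : 2 < n)
    (M : Fin (n / 2) → SimpleGraph (Fin n))
    (hpm : ∀ i, ∀ v, ∃! w, (M i).Adj v w)
    (hdisj : Pairwise fun i j => Disjoint (M i) (M j))
    (G : SimpleGraph (Fin n)) (hG : G = ⨆ i, M i)
    (hbip : ∃ c : Fin n → Bool, ∀ u v, G.Adj u v → c u ≠ c v) :
    ∃ S : Finset (Fin n), S.card = n / 2 ∧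
      ∀ u v : Fin n, G.Adj u v ↔ ¬ (u ∈ S ↔ v ∈ S) := by
  classical
  obtain ⟨c, hc⟩ := hbip
  let C : G.Coloring Bool := Coloring.mk c fun h => hc _ _ h
  have hreg : G.IsRegularOfDegree (Fintype.card (Fin n) / 2) := by
    subst hG
    simpa using isRegularOfDegree_iSup_of_existsUnique hpm hdisj
  have hk : 0 < Fintype.card (Fin n) / 2 := by
    rw [Fintype.card_fin]
    omega
  refine ⟨univ.filter (C · = true), by simpa using hreg.card_filter_coloring_eq_half hk C true,
    fun u v => ?_⟩
  rw [hreg.adj_iff_coloring_ne hk C]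
  simp only [mem_filter, mem_univ, true_and]
  cases C u <;> cases C v <;> simp

theorem stmt7 (n : ℕ) (hn : 2 < n) (heven : Even n)
    (M : Fin (n / 2) → SimpleGraph (Fin n))
    (hpm : ∀ i, ∀ v, ∃! w, (M i).Adj v w)
    (hdisj : Pairwise fun i j => Disjoint (M i) (M j))
    (G : SimpleGraph (Fin n)) (hG : G = ⨆ i, M i)
    (hbip : ∃ c : Fin n → Bool, ∀ u v, G.Adj u v → c u ≠ c v) :
    ∃ S : Finset (Fin n), S.card = n / 2 ∧
      ∀ u v : Fin n, G.Adj u v ↔ ¬ (u ∈ S ↔ v ∈ S) :=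
  stmt7_general n hn M hpm hdisj G hG hbip
end

section
/- Let n ≥ 2 and let A be a symmetric, irreducible, exactly diagonally dominant n×n real matrix. For any index k, the (n-1)×(n-1) principal submatrix A(k) obtained by deleting row and column k from A is nonsingular. -/
open Matrix

/-!
If `A(k)` were singular, a kernel vector extended by `0` at `k` would give `y ≠ 0` with `y k = 0`
and `(A y) i = 0` for all `i ≠ k`. At a row `i ≠ k` where `|y|` is maximal, diagonal dominance
leaves no slack in `|A i i| |y i| ≤ ∑ |A i j| |y j|`, so `|y|` is maximal at every `j` with
`A i j ≠ 0`; by symmetry these are the neighbours of `i` in the graph of `A`. By connectivity the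
maximum spreads to `k`, where `y` vanishes, so `y = 0`.
-/

theorem SimpleGraph.Walk.mem_of_forall_adj_mem {V : Type*} {G : SimpleGraph V} {s : Set V}
    (hs : ∀ u v, G.Adj u v → u ∈ s → v ∈ s) {u v : V} (p : G.Walk u v) (hu : u ∈ s) : v ∈ s := by
  induction p with
  | nil => exact hu
  | cons h _ ih => exact ih (hs _ _ h hu)

theorem SimpleGraph.Connected.eq_univ_of_forall_adj_mem {V : Type*} {G : SimpleGraph V}
    (hG : G.Connected) {s : Set V} (hs : ∀ u v, G.Adj u v → u ∈ s → v ∈ s) {u : V} (hu : u ∈ s) :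
    s = Set.univ :=
  Set.eq_univ_of_forall fun v => (hG.preconnected u v).some.mem_of_forall_adj_mem hs hu

section DiagonallyDominant

variable {ι K : Type*} [Fintype ι] [DecidableEq ι] [Field K] [LinearOrder K] [IsStrictOrderedRing K]

theorem abs_eq_of_mulVec_apply_eq_zero {A : Matrix ι ι K} {y : ι → K} {v : ι}
    (hdom : ∑ w ∈ Finset.univ.erase v, |A v w| ≤ |A v v|) (hAy : (A *ᵥ y) v = 0)
    (hmax : ∀ w, |y w| ≤ |y v|) {w : ι} (hvw : A v w ≠ 0) : |y w| = |y v| := by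
  obtain rfl | hwv := eq_or_ne w v
  · rfl
  have hdiag : A v v * y v = -∑ u ∈ Finset.univ.erase v, A v u * y u := by
    rw [mulVec, dotProduct, ← Finset.add_sum_erase _ _ (Finset.mem_univ v)] at hAy
    linear_combination hAy
  have hsum : ∑ u ∈ Finset.univ.erase v, |A v u| * (|y v| - |y u|) ≤ 0 := by
    have : |A v v| * |y v| ≤ ∑ u ∈ Finset.univ.erase v, |A v u| * |y u| :=
      calc |A v v| * |y v| = |∑ u ∈ Finset.univ.erase v, A v u * y u| := by
            rw [← abs_mul, hdiag, abs_neg]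
        _ ≤ ∑ u ∈ Finset.univ.erase v, |A v u * y u| := Finset.abs_sum_le_sum_abs _ _
        _ = ∑ u ∈ Finset.univ.erase v, |A v u| * |y u| := by simp only [abs_mul]
    simp only [mul_sub, Finset.sum_sub_distrib, ← Finset.sum_mul]
    nlinarith [abs_nonneg (y v)]
  have hterm := (Finset.sum_eq_zero_iff_of_nonneg fun u _ =>
    mul_nonneg (abs_nonneg (A v u)) (sub_nonneg.2 (hmax u))).1
    (le_antisymm hsum (Finset.sum_nonneg fun u _ =>
      mul_nonneg (abs_nonneg (A v u)) (sub_nonneg.2 (hmax u))))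
    w (Finset.mem_erase.2 ⟨hwv, Finset.mem_univ w⟩)
  rcases mul_eq_zero.1 hterm with h | h
  · exact absurd (abs_eq_zero.1 h) hvw
  · exact (sub_eq_zero.1 h).symm

theorem eq_zero_of_mulVec_apply_eq_zero_of_connected {A : Matrix ι ι K} {G : SimpleGraph ι}
    (hG : G.Connected) (hadj : ∀ u v, G.Adj u v → A u v ≠ 0)
    (hdom : ∀ i, ∑ j ∈ Finset.univ.erase i, |A i j| ≤ |A i i|) {y : ι → K} {k : ι}
    (hyk : y k = 0) (hAy : ∀ i ≠ k, (A *ᵥ y) i = 0) : y = 0 := by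
  obtain ⟨v₀, -, hv₀⟩ := Finset.exists_max_image Finset.univ (fun v => |y v|) ⟨k, Finset.mem_univ k⟩
  set M := |y v₀|
  have hmax : ∀ w, |y w| ≤ M := fun w => hv₀ w (Finset.mem_univ w)
  have hclosed : ∀ u v, G.Adj u v → u ∈ {w | |y w| = M} → v ∈ {w | |y w| = M} := by
    intro u v huv (hu : |y u| = M)
    obtain rfl | hk := eq_or_ne u k
    · have hM : M = 0 := by rw [← hu, hyk, abs_zero]
      exact le_antisymm (hmax v) (hM ▸ abs_nonneg _)
    · exact (abs_eq_of_mulVec_apply_eq_zero (hdom u) (hAy u hk) (hu ▸ hmax) (hadj u v huv)).trans hu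
  have hall := hG.eq_univ_of_forall_adj_mem hclosed (u := v₀) rfl
  have hM : M = 0 := by
    have : k ∈ {w | |y w| = M} := hall ▸ Set.mem_univ k
    rw [← this, hyk, abs_zero]
  funext w
  exact abs_nonpos_iff.1 (hM ▸ hmax w)

end DiagonallyDominant

theorem Matrix.mulVec_insertNth_zero_apply_succAbove {R : Type*} [NonUnitalNonAssocSemiring R]
    {n : ℕ} (A : Matrix (Fin (n + 1)) (Fin (n + 1)) R) (k : Fin (n + 1)) (x : Fin n → R)
    (i : Fin n) :
    (A *ᵥ k.insertNth 0 x) (k.succAbove i) = (A.submatrix k.succAbove k.succAbove *ᵥ x) i := by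
  simp [mulVec, dotProduct, Fin.sum_univ_succAbove _ k]

theorem stmt10_general (n : ℕ) (A : Matrix (Fin (n + 1)) (Fin (n + 1)) ℝ)
    (hsymm : A.IsSymm)
    (hirr : (SimpleGraph.fromRel fun i j => A i j ≠ 0).Connected)
    (hedd : ∀ i, |A i i| = ∑ j ∈ Finset.univ.erase i, |A i j|)
    (k : Fin (n + 1)) :
    IsUnit (A.submatrix k.succAbove k.succAbove).det := by
  rw [isUnit_iff_ne_zero]
  intro hdet
  obtain ⟨x, hx, hAx⟩ := exists_mulVec_eq_zero_iff.2 hdet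
  have hadj : ∀ u v, (SimpleGraph.fromRel fun i j => A i j ≠ 0).Adj u v → A u v ≠ 0 := by
    rintro u v ⟨-, huv | hvu⟩
    exacts [huv, hsymm.apply u v ▸ hvu]
  have hy := eq_zero_of_mulVec_apply_eq_zero_of_connected hirr hadj (fun i => (hedd i).ge)
    (y := k.insertNth 0 x) (Fin.insertNth_apply_same _ _ _) fun i hi => by
      obtain ⟨j, rfl⟩ := Fin.exists_succAbove_eq hi
      rw [A.mulVec_insertNth_zero_apply_succAbove, hAx, Pi.zero_apply]
  exact hx (funext fun i => by simpa using congrFun hy (k.succAbove i))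

theorem stmt10 (n : ℕ) (hn : 1 ≤ n) (A : Matrix (Fin (n + 1)) (Fin (n + 1)) ℝ)
    (hsymm : A.IsSymm)
    (hirr : (SimpleGraph.fromRel fun i j => A i j ≠ 0).Connected)
    (hedd : ∀ i, |A i i| = ∑ j ∈ Finset.univ.erase i, |A i j|)
    (k : Fin (n + 1)) :
    IsUnit (A.submatrix k.succAbove k.succAbove).det :=
  stmt10_general n A hsymm hirr hedd k
end

section
/- Let A be a symmetric, irreducible, exactly diagonally dominant n×n matrix (n ≥ 2). Then the rank of A is at least n - 1; in particular the nullspace of A has dimension at most 1. -/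
/-!
Maximum principle. Let `A z = 0` and let `|z|` attain its maximum `M` at `i`. Row `i` gives
`|A i i| M ≤ ∑_{k ≠ i} |A i k| |z k|`, and diagonal dominance turns this into
`∑_{k ≠ i} |A i k| (M - |z k|) ≤ 0`, so `|z j| = M` at every `j` with `A i j ≠ 0`.
By irreducibility `|z|` is constant, hence a kernel vector vanishing at one coordinate is zero,
and evaluation at one coordinate embeds the kernel into the scalars.
-/

open Matrix Finset

theorem SimpleGraph.Reachable.of_forall_adj_imp {V : Type*} {G : SimpleGraph V} {P : V → Prop}
    (hP : ∀ u v, G.Adj u v → P u → P v) {u v : V} (huv : G.Reachable u v) (hu : P u) : P v := by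
  obtain ⟨w⟩ := huv
  induction w with
  | nil => exact hu
  | cons h _ ih => exact ih (hP _ _ h hu)

namespace Matrix

variable {ι K : Type*} [Fintype ι] [DecidableEq ι] [Field K] [LinearOrder K]
  [IsStrictOrderedRing K] {A : Matrix ι ι K} {z : ι → K}

theorem abs_apply_eq_of_mulVec_eq_zero (hz : A *ᵥ z = 0) {M : K} (hM : ∀ k, |z k| ≤ M) {i : ι}
    (hdom : ∑ k ∈ univ.erase i, |A i k| ≤ |A i i|) (hi : |z i| = M) {j : ι} (hij : A i j ≠ 0) :
    |z j| = M := by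
  by_cases hji : j = i
  · rwa [hji]
  have hM₀ : 0 ≤ M := (abs_nonneg _).trans (hM i)
  have hrow : A i i * z i = -∑ k ∈ univ.erase i, A i k * z k := by
    have := congrFun hz i
    rw [mulVec, dotProduct, ← add_sum_erase _ _ (mem_univ i)] at this
    exact eq_neg_of_add_eq_zero_left this
  have hslack_nonneg : ∀ k, 0 ≤ |A i k| * (M - |z k|) :=
    fun k => mul_nonneg (abs_nonneg _) (sub_nonneg.2 (hM k))
  have hslack : ∑ k ∈ univ.erase i, |A i k| * (M - |z k|) = 0 := by
    refine le_antisymm ?_ (sum_nonneg fun k _ => hslack_nonneg k)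
    calc ∑ k ∈ univ.erase i, |A i k| * (M - |z k|)
        = (∑ k ∈ univ.erase i, |A i k|) * M - ∑ k ∈ univ.erase i, |A i k * z k| := by
          simp only [mul_sub, abs_mul, sum_sub_distrib, sum_mul]
      _ ≤ |A i i| * M - |∑ k ∈ univ.erase i, A i k * z k| := by
          gcongr
          exact abs_sum_le_sum_abs _ _
      _ = 0 := by rw [← abs_neg (∑ k ∈ univ.erase i, _), ← hrow, abs_mul, hi, sub_self]
  have hterm := (sum_eq_zero_iff_of_nonneg fun k _ => hslack_nonneg k).1 hslack j
    (mem_erase.2 ⟨hji, mem_univ j⟩)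
  linarith [(mul_eq_zero.1 hterm).resolve_left (abs_ne_zero.2 hij)]

variable (hsymm : A.IsSymm) (hirr : (SimpleGraph.fromRel fun i j => A i j ≠ 0).Connected)
  (hdom : ∀ i, ∑ k ∈ univ.erase i, |A i k| ≤ |A i i|)
include hsymm hirr hdom

theorem eq_zero_of_mulVec_eq_zero_of_apply_eq_zero (hz : A *ᵥ z = 0) {i₀ : ι} (hz₀ : z i₀ = 0) :
    z = 0 := by
  have := hirr.nonempty
  obtain ⟨m, hm⟩ := Finite.exists_max fun k => |z k|
  have hconst : |z i₀| = |z m| := by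
    refine (hirr m i₀).of_forall_adj_imp (P := fun k => |z k| = |z m|) (fun u v huv hu => ?_) rfl
    obtain ⟨-, h | h⟩ := (SimpleGraph.fromRel_adj _ u v).1 huv
    · exact abs_apply_eq_of_mulVec_eq_zero hz hm (hdom u) hu h
    · exact abs_apply_eq_of_mulVec_eq_zero hz hm (hdom u) hu (hsymm.apply u v ▸ h)
  funext k
  exact abs_nonpos_iff.1 (by simpa [hz₀, ← hconst] using hm k)

theorem finrank_ker_mulVecLin_le_one : Module.finrank K (LinearMap.ker A.mulVecLin) ≤ 1 := by
  obtain ⟨i₀⟩ := hirr.nonempty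
  let ev : LinearMap.ker A.mulVecLin →ₗ[K] K :=
    (LinearMap.proj i₀).comp (LinearMap.ker A.mulVecLin).subtype
  have hev : Function.Injective ev := by
    rw [← LinearMap.ker_eq_bot, LinearMap.ker_eq_bot']
    intro z hz
    exact Subtype.ext (eq_zero_of_mulVec_eq_zero_of_apply_eq_zero hsymm hirr hdom z.2 hz)
  simpa using LinearMap.finrank_le_finrank_of_injective hev

theorem card_sub_one_le_rank : Fintype.card ι - 1 ≤ A.rank := by
  have := LinearMap.finrank_range_add_finrank_ker A.mulVecLin
  have := finrank_ker_mulVecLin_le_one hsymm hirr hdom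
  rw [Module.finrank_fintype_fun_eq_card] at *
  rw [rank]
  omega

end Matrix

theorem stmt11_general (n : ℕ) (A : Matrix (Fin n) (Fin n) ℝ)
    (hsymm : A.IsSymm)
    (hirr : (SimpleGraph.fromRel fun i j => A i j ≠ 0).Connected)
    (hedd : ∀ i, |A i i| = ∑ j ∈ Finset.univ.erase i, |A i j|) :
    n - 1 ≤ A.rank ∧ Module.finrank ℝ (LinearMap.ker A.mulVecLin) ≤ 1 := by
  have hdom i := (hedd i).ge
  exact ⟨by simpa using card_sub_one_le_rank hsymm hirr hdom,
    finrank_ker_mulVecLin_le_one hsymm hirr hdom⟩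

theorem stmt11 (n : ℕ) (hn : 2 ≤ n) (A : Matrix (Fin n) (Fin n) ℝ)
    (hsymm : A.IsSymm)
    (hirr : (SimpleGraph.fromRel fun i j => A i j ≠ 0).Connected)
    (hedd : ∀ i, |A i i| = ∑ j ∈ Finset.univ.erase i, |A i j|) :
    n - 1 ≤ A.rank ∧ Module.finrank ℝ (LinearMap.ker A.mulVecLin) ≤ 1 :=
  stmt11_general n A hsymm hirr hedd
end

section
/- Let A be a symmetric, irreducible, exactly diagonally dominant singular n×n matrix (n ≥ 2), and let v ≠ 0 satisfy Av = 0. Then every entry of v is nonzero. -/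
/-!
Maximum principle: at an index where `|v|` is maximal, the row of `A v = 0` together with
diagonal dominance forces `|v j| = |v i|` for every `j` with `A i j ≠ 0`. Irreducibility
propagates this along the graph of `A`, so `|v|` is constant, and the constant is positive
since `v ≠ 0`.
-/

open Matrix Finset

theorem SimpleGraph.Preconnected.forall_of_forall_adj {V : Type*} {G : SimpleGraph V}
    (hG : G.Preconnected) {P : V → Prop} (hP : ∀ a b, G.Adj a b → P a → P b) {u : V} (hu : P u)
    (w : V) : P w := by
  obtain ⟨p⟩ := hG u w
  induction p with
  | nil => exact hu
  | cons h _ ih => exact ih (hP _ _ h hu)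

section DiagonallyDominant

variable {ι K : Type*} [Fintype ι] [DecidableEq ι] [Field K] [LinearOrder K]
  [IsStrictOrderedRing K] {A : Matrix ι ι K} {v : ι → K}

theorem Matrix.abs_apply_eq_of_mulVec_apply_eq_zero {i j : ι}
    (hdom : ∑ k ∈ univ.erase i, |A i k| ≤ |A i i|) (hmax : ∀ k, |v k| ≤ |v i|)
    (hAv : (A *ᵥ v) i = 0) (hij : A i j ≠ 0) : |v j| = |v i| := by
  obtain rfl | hji := eq_or_ne j i
  · rfl
  have hrow : A i i * v i = -∑ k ∈ univ.erase i, A i k * v k := by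
    rw [eq_neg_iff_add_eq_zero, add_sum_erase univ (fun k => A i k * v k) (mem_univ i)]
    exact hAv
  have hle : ∀ k ∈ univ.erase i, |A i k| * |v k| ≤ |A i k| * |v i| :=
    fun k _ => mul_le_mul_of_nonneg_left (hmax k) (abs_nonneg _)
  have hsum : ∑ k ∈ univ.erase i, |A i k| * |v k| = ∑ k ∈ univ.erase i, |A i k| * |v i| := by
    refine le_antisymm (sum_le_sum hle) ?_
    calc ∑ k ∈ univ.erase i, |A i k| * |v i| = (∑ k ∈ univ.erase i, |A i k|) * |v i| :=
          (sum_mul _ _ _).symm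
      _ ≤ |A i i| * |v i| := mul_le_mul_of_nonneg_right hdom (abs_nonneg _)
      _ = |∑ k ∈ univ.erase i, A i k * v k| := by rw [← abs_mul, hrow, abs_neg]
      _ ≤ ∑ k ∈ univ.erase i, |A i k| * |v k| := by
          simpa only [abs_mul] using abs_sum_le_sum_abs (fun k => A i k * v k) (univ.erase i)
  exact mul_left_cancel₀ (abs_ne_zero.mpr hij)
    ((sum_eq_sum_iff_of_le hle).mp hsum j (mem_erase.mpr ⟨hji, mem_univ j⟩))

theorem Matrix.abs_apply_eq_of_mulVec_eq_zero_s12 (hA : A.IsSymm)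
    (hconn : (SimpleGraph.fromRel fun i j => A i j ≠ 0).Preconnected)
    (hdom : ∀ i, ∑ j ∈ univ.erase i, |A i j| ≤ |A i i|) (hAv : A *ᵥ v = 0) (i j : ι) :
    |v i| = |v j| := by
  have : Nonempty ι := ⟨i⟩
  obtain ⟨m, hm⟩ := Finite.exists_max fun k => |v k|
  have hprop : ∀ a b, (SimpleGraph.fromRel fun i j => A i j ≠ 0).Adj a b →
      |v a| = |v m| → |v b| = |v m| := by
    rintro a b ⟨-, hab⟩ ha
    have hab : A a b ≠ 0 := hab.elim id fun hba => hA.apply a b ▸ hba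
    exact (abs_apply_eq_of_mulVec_apply_eq_zero (hdom a) (ha ▸ hm) (congrFun hAv a) hab).trans ha
  exact (hconn.forall_of_forall_adj hprop rfl i).trans
    (hconn.forall_of_forall_adj hprop rfl j).symm

end DiagonallyDominant

theorem stmt12_general (n : ℕ) (A : Matrix (Fin n) (Fin n) ℝ)
    (hsymm : A.IsSymm)
    (hirr : (SimpleGraph.fromRel fun i j => A i j ≠ 0).Connected)
    (hedd : ∀ i, |A i i| = ∑ j ∈ Finset.univ.erase i, |A i j|)
    (v : Fin n → ℝ) (hv : v ≠ 0) (hAv : A *ᵥ v = 0) :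
    ∀ i, v i ≠ 0 := by
  obtain ⟨j, hj⟩ := Function.ne_iff.mp hv
  intro i hi
  have hij :=
    abs_apply_eq_of_mulVec_eq_zero_s12 hsymm hirr.preconnected (fun k => (hedd k).ge) hAv i j
  rw [hi, abs_zero, eq_comm, abs_eq_zero] at hij
  exact hj hij

theorem stmt12 (n : ℕ) (hn : 2 ≤ n) (A : Matrix (Fin n) (Fin n) ℝ)
    (hsymm : A.IsSymm)
    (hirr : (SimpleGraph.fromRel fun i j => A i j ≠ 0).Connected)
    (hedd : ∀ i, |A i i| = ∑ j ∈ Finset.univ.erase i, |A i j|)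
    (hsing : A.det = 0)
    (v : Fin n → ℝ) (hv : v ≠ 0) (hAv : A *ᵥ v = 0) :
    ∀ i, v i ≠ 0 :=
  stmt12_general n A hsymm hirr hedd v hv hAv
end

section
/- Let A be a symmetric, irreducible, exactly diagonally dominant singular n×n matrix with Av = 0, v ≠ 0, and let f satisfy vᵀf = 0. Fix k, let be A with its k-th row replaced by vᵀ, and let f̂ be f with its k-th entry replaced by 0. Then the unique solution x* of Âx = f̂ satisfies Ax* = f. -/
/-!
In a diagonally dominant matrix, a kernel vector `v` whose modulus is maximal at `i` has the same
modulus at every `j` with `A i j ≠ 0`: the row equation at `i` forces every estimate in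
`‖A i i‖ ‖v i‖ ≤ ∑ ‖A i j‖ ‖v j‖ ≤ ∑ ‖A i j‖ ‖v i‖` to be an equality. Irreducibility spreads this
along the graph of `A`, so `|v|` is constant and `v k ≠ 0`. Symmetry makes `v` a left kernel vector
too, so `vᵀ (A x - f) = 0`; as `A x - f` can only be nonzero in entry `k`, it vanishes.
-/

open Matrix

theorem SimpleGraph.Connected.forall_of_adj_imp {V : Type*} {G : SimpleGraph V} (hG : G.Connected)
    {p : V → Prop} (hstep : ∀ u w, G.Adj u w → p u → p w) {u : V} (hu : p u) (w : V) : p w := by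
  induction (G.reachable_iff_reflTransGen u w).1 (hG u w) with
  | refl => exact hu
  | tail _ hadj ih => exact hstep _ _ hadj ih

namespace Matrix

variable {ι : Type*} [Fintype ι] [DecidableEq ι]

def IsDiagDominant {𝕜 : Type*} [NormedField 𝕜] (A : Matrix ι ι 𝕜) : Prop :=
  ∀ i, ∑ j ∈ Finset.univ.erase i, ‖A i j‖ ≤ ‖A i i‖

section NormedField

variable {𝕜 : Type*} [NormedField 𝕜] {A : Matrix ι ι 𝕜} {v : ι → 𝕜}

theorem IsDiagDominant.norm_apply_eq_of_mulVec_eq_zero (hdd : A.IsDiagDominant)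
    (hAv : A *ᵥ v = 0) {i : ι} (hmax : ∀ l, ‖v l‖ ≤ ‖v i‖) {j : ι} (hji : j ≠ i)
    (hAij : A i j ≠ 0) : ‖v j‖ = ‖v i‖ := by
  have hrow : A i i * v i = -∑ l ∈ Finset.univ.erase i, A i l * v l := by
    have h := congrFun hAv i
    rw [mulVec, dotProduct, ← Finset.add_sum_erase _ _ (Finset.mem_univ i)] at h
    exact eq_neg_of_add_eq_zero_left h
  have hle : ∀ l ∈ Finset.univ.erase i, ‖A i l‖ * ‖v l‖ ≤ ‖A i l‖ * ‖v i‖ :=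
    fun l _ => mul_le_mul_of_nonneg_left (hmax l) (norm_nonneg _)
  have hsum : ∑ l ∈ Finset.univ.erase i, ‖A i l‖ * ‖v i‖ ≤
      ∑ l ∈ Finset.univ.erase i, ‖A i l‖ * ‖v l‖ :=
    calc ∑ l ∈ Finset.univ.erase i, ‖A i l‖ * ‖v i‖ ≤ ‖A i i‖ * ‖v i‖ := by
          rw [← Finset.sum_mul]
          exact mul_le_mul_of_nonneg_right (hdd i) (norm_nonneg _)
      _ = ‖∑ l ∈ Finset.univ.erase i, A i l * v l‖ := by rw [← norm_mul, hrow, norm_neg]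
      _ ≤ ∑ l ∈ Finset.univ.erase i, ‖A i l‖ * ‖v l‖ := by
          simpa only [norm_mul] using norm_sum_le (Finset.univ.erase i) fun l => A i l * v l
  have hterm := (Finset.sum_eq_sum_iff_of_le hle).1 ((Finset.sum_le_sum hle).antisymm hsum) j
    (Finset.mem_erase.2 ⟨hji, Finset.mem_univ j⟩)
  exact mul_left_cancel₀ (norm_ne_zero_iff.2 hAij) hterm

theorem IsDiagDominant.norm_apply_eq_of_mulVec_eq_zero_of_connected (hdd : A.IsDiagDominant)
    (hsymm : A.IsSymm) (hirr : (SimpleGraph.fromRel fun i j => A i j ≠ 0).Connected)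
    (hAv : A *ᵥ v = 0) (i j : ι) : ‖v i‖ = ‖v j‖ := by
  obtain ⟨m, -, hm⟩ := Finset.exists_max_image Finset.univ (fun l => ‖v l‖) ⟨i, Finset.mem_univ i⟩
  have hall : ∀ l, ‖v l‖ = ‖v m‖ := by
    refine hirr.forall_of_adj_imp (p := fun l => ‖v l‖ = ‖v m‖) (fun a b hab ha => ?_) rfl
    have hAab : A a b ≠ 0 := by
      rcases (SimpleGraph.fromRel_adj _ a b).1 hab with ⟨-, h | h⟩
      · exact h
      · rwa [hsymm.apply]
    refine (hdd.norm_apply_eq_of_mulVec_eq_zero hAv (fun l => ?_) hab.ne.symm hAab).trans ha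
    exact ha ▸ hm l (Finset.mem_univ l)
  rw [hall i, hall j]

end NormedField

theorem mulVec_eq_of_updateRow_mulVec_eq {R : Type*} [CommRing R] [NoZeroDivisors R]
    {A : Matrix ι ι R} {v f x : ι → R} {k : ι} (hvA : v ᵥ* A = 0) (hf : v ⬝ᵥ f = 0)
    (hvk : v k ≠ 0) (hx : A.updateRow k v *ᵥ x = Function.update f k 0) : A *ᵥ x = f := by
  rw [updateRow_mulVec] at hx
  have hoff : ∀ j ≠ k, (A *ᵥ x) j = f j := fun j hj => by simpa [hj] using congrFun hx j
  have hdiff : A *ᵥ x - f = Pi.single k ((A *ᵥ x) k - f k) := by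
    ext j
    by_cases hj : j = k
    · subst hj; simp
    · simp [hj, hoff j hj]
  have hk : v k * ((A *ᵥ x) k - f k) = 0 := by
    rw [← dotProduct_single, ← hdiff, dotProduct_sub, dotProduct_mulVec, hvA, zero_dotProduct, hf,
      sub_zero]
  rw [(mul_eq_zero.1 hk).resolve_left hvk, Pi.single_zero] at hdiff
  exact sub_eq_zero.1 hdiff

end Matrix

theorem stmt15_general (n : ℕ) (A : Matrix (Fin n) (Fin n) ℝ)
    (hsymm : A.IsSymm)
    (hirr : (SimpleGraph.fromRel fun i j => A i j ≠ 0).Connected)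
    (hedd : ∀ i, |A i i| = ∑ j ∈ Finset.univ.erase i, |A i j|)
    (v : Fin n → ℝ) (hv : v ≠ 0) (hAv : A *ᵥ v = 0)
    (f : Fin n → ℝ) (hf : v ⬝ᵥ f = 0) (k : Fin n)
    (x : Fin n → ℝ) (hx : (A.updateRow k v) *ᵥ x = Function.update f k 0) :
    A *ᵥ x = f := by
  have hdd : A.IsDiagDominant := fun i => by simpa only [Real.norm_eq_abs] using (hedd i).ge
  have hvA : v ᵥ* A = 0 := by rw [← mulVec_transpose, hsymm.eq, hAv]
  have hvk : v k ≠ 0 := by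
    obtain ⟨i, hi⟩ := Function.ne_iff.1 hv
    rw [← norm_ne_zero_iff, hdd.norm_apply_eq_of_mulVec_eq_zero_of_connected hsymm hirr hAv k i]
    exact norm_ne_zero_iff.2 hi
  exact mulVec_eq_of_updateRow_mulVec_eq hvA hf hvk hx

theorem stmt15 (n : ℕ) (hn : 2 ≤ n) (A : Matrix (Fin n) (Fin n) ℝ)
    (hsymm : A.IsSymm)
    (hirr : (SimpleGraph.fromRel fun i j => A i j ≠ 0).Connected)
    (hedd : ∀ i, |A i i| = ∑ j ∈ Finset.univ.erase i, |A i j|)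
    (hsing : A.det = 0)
    (v : Fin n → ℝ) (hv : v ≠ 0) (hAv : A *ᵥ v = 0)
    (f : Fin n → ℝ) (hf : v ⬝ᵥ f = 0) (k : Fin n)
    (x : Fin n → ℝ) (hx : (A.updateRow k v) *ᵥ x = Function.update f k 0) :
    A *ᵥ x = f :=
  stmt15_general n A hsymm hirr hedd v hv hAv f hf k x hx
end

section
/- Let M be the Laplacian of a connected graph on n vertices with eigenvalues 0 = λ₁ < λ₂ ≤ ... ≤ λ_n ≤ n, let p be a vector with eᵀp = 0, and let r be the solution of Mr = p with eᵀr = 0. Then ‖r - p/n‖ ≤ ‖p‖ (n - λ₂)/(n λ₂) in the Euclidean norm. -/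
/-!
Expand `r` in an orthonormal eigenbasis of the Laplacian `M`. In the coordinate of an eigenvalue
`μ`, the vector `p = M r` has coefficient `μ rᵢ` and `r - p / n` has coefficient `(1 - μ / n) rᵢ`.
For `μ = 0` the eigenvector is constant (the graph is connected), so `rᵢ = 0` because `eᵀr = 0`;
for `λ₂ ≤ μ ≤ n` one has `0 ≤ 1 - μ / n ≤ μ (n - λ₂) / (n λ₂)`. Summing the squares of these
coordinatewise bounds gives the estimate.
-/

open Matrix

theorem OrthonormalBasis.norm_le_mul_norm_of_forall_norm_repr_le {𝕜 ι E : Type*} [RCLike 𝕜]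
    [Fintype ι] [NormedAddCommGroup E] [InnerProductSpace 𝕜 E] (b : OrthonormalBasis ι 𝕜 E)
    {x y : E} {K : ℝ} (hK : 0 ≤ K) (h : ∀ i, ‖b.repr x i‖ ≤ K * ‖b.repr y i‖) :
    ‖x‖ ≤ K * ‖y‖ := by
  rw [← b.repr.norm_map x, ← b.repr.norm_map y]
  refine (pow_le_pow_iff_left₀ (norm_nonneg _) (by positivity) two_ne_zero).1 ?_
  rw [mul_pow, EuclideanSpace.norm_sq_eq, EuclideanSpace.norm_sq_eq, Finset.mul_sum]
  gcongr with i
  rw [← mul_pow]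
  exact pow_le_pow_left₀ (norm_nonneg _) (h i) 2

open Module.End in
theorem LinearMap.IsSymmetric.norm_sub_smul_apply_le {E : Type*} [NormedAddCommGroup E]
    [InnerProductSpace ℝ E] [FiniteDimensional ℝ E] {T : E →ₗ[ℝ] E} (hT : T.IsSymmetric)
    {c K : ℝ} (hK : 0 ≤ K) {v : E}
    (h : ∀ μ w, HasEigenvector T μ w → inner ℝ w v = 0 ∨ |1 - c * μ| ≤ K * |μ|) :
    ‖v - c • T v‖ ≤ K * ‖T v‖ := by
  set b := hT.eigenvectorBasis rfl
  refine b.norm_le_mul_norm_of_forall_norm_repr_le hK fun i => ?_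
  have hTv : b.repr (T v) i = hT.eigenvalues rfl i * b.repr v i :=
    hT.eigenvectorBasis_apply_self_apply rfl v i
  have hdiff : b.repr (v - c • T v) i = (1 - c * hT.eigenvalues rfl i) * b.repr v i := by
    simp only [map_sub, map_smul, PiLp.sub_apply, PiLp.smul_apply, hTv, smul_eq_mul]
    ring
  rw [hdiff, hTv, Real.norm_eq_abs, Real.norm_eq_abs, abs_mul, abs_mul, ← mul_assoc]
  rcases h _ _ (hT.hasEigenvector_eigenvectorBasis rfl i) with horth | hle
  · simp [b, OrthonormalBasis.repr_apply_apply, horth]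
  · exact mul_le_mul_of_nonneg_right hle (abs_nonneg _)

theorem SimpleGraph.Connected.dotProduct_eq_zero_of_lapMatrix_mulVec_eq_zero {V : Type*}
    [Fintype V] [DecidableEq V] {G : SimpleGraph V} [DecidableRel G.Adj] (hG : G.Connected)
    {x y : V → ℝ} (hx : G.lapMatrix ℝ *ᵥ x = 0) (hy : ∑ i, y i = 0) : x ⬝ᵥ y = 0 := by
  obtain ⟨v₀⟩ := hG.nonempty
  have hconst : x = fun _ => x v₀ := funext fun i =>
    (G.lapMatrix_mulVec_eq_zero_iff_forall_reachable).1 hx i v₀ (hG.preconnected i v₀)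
  rw [hconst, dotProduct, ← Finset.mul_sum, hy, mul_zero]

theorem abs_one_sub_inv_mul_le {l μ N : ℝ} (hl : 0 < l) (hlμ : l ≤ μ) (hμN : μ ≤ N) :
    |1 - N⁻¹ * μ| ≤ (N - l) / (N * l) * |μ| := by
  have hN : 0 < N := by linarith
  rw [abs_of_nonneg (by rw [sub_nonneg, inv_mul_le_one₀ hN]; exact hμN), abs_of_pos (by linarith),
    div_mul_eq_mul_div, le_div_iff₀ (by positivity)]
  field_simp
  nlinarith

theorem stmt18_general (n : ℕ) (G : SimpleGraph (Fin n)) [DecidableRel G.Adj]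
    (hconn : G.Connected)
    (M : Matrix (Fin n) (Fin n) ℝ) (hM : M = G.lapMatrix ℝ)
    (lam2 : ℝ) (hlam2 : 0 < lam2) (hlam2n : lam2 ≤ n)
    (heig : ∀ (μ : ℝ) (x : Fin n → ℝ), x ≠ 0 → M *ᵥ x = μ • x →
      μ = 0 ∨ (lam2 ≤ μ ∧ μ ≤ n))
    (p r : Fin n → ℝ)
    (hr : M *ᵥ r = p) (hrsum : ∑ i, r i = 0) :
    Real.sqrt (∑ i, (r i - p i / n) ^ 2) ≤
      Real.sqrt (∑ i, p i ^ 2) * ((n - lam2) / (n * lam2)) := by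
  have hK : 0 ≤ (n - lam2) / (n * lam2) := div_nonneg (sub_nonneg.2 hlam2n) (by positivity)
  have hT : (toEuclideanLin M).IsSymmetric := by
    rw [isSymmetric_toEuclideanLin_iff, hM]
    exact G.isSymm_lapMatrix ℝ
  have key := hT.norm_sub_smul_apply_le (c := (n : ℝ)⁻¹) hK (v := WithLp.toLp 2 r) ?_
  · simp only [EuclideanSpace.norm_eq] at key
    simpa [toLpLin_toLp, hr, div_eq_inv_mul, mul_comm] using key
  intro μ w hw
  obtain ⟨hμw, hw0⟩ := Module.End.hasEigenvector_iff.1 hw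
  have hMw : M *ᵥ w.ofLp = μ • w.ofLp :=
    congrArg WithLp.ofLp (Module.End.mem_eigenspace_iff.1 hμw)
  rcases heig μ w.ofLp (by simpa using hw0) hMw with rfl | ⟨hlam2μ, hμn⟩
  · left
    rw [EuclideanSpace.inner_eq_star_dotProduct, star_trivial, dotProduct_comm]
    exact hconn.dotProduct_eq_zero_of_lapMatrix_mulVec_eq_zero (by rw [← hM, hMw, zero_smul])
      hrsum
  · exact Or.inr (abs_one_sub_inv_mul_le hlam2 hlam2μ hμn)

theorem stmt18 (n : ℕ) (G : SimpleGraph (Fin n)) [DecidableRel G.Adj]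
    (hconn : G.Connected)
    (M : Matrix (Fin n) (Fin n) ℝ) (hM : M = G.lapMatrix ℝ)
    (lam2 : ℝ) (hlam2 : 0 < lam2) (hlam2n : lam2 ≤ n)
    (heig : ∀ (μ : ℝ) (x : Fin n → ℝ), x ≠ 0 → M *ᵥ x = μ • x →
      μ = 0 ∨ (lam2 ≤ μ ∧ μ ≤ n))
    (p r : Fin n → ℝ) (hp : ∑ i, p i = 0)
    (hr : M *ᵥ r = p) (hrsum : ∑ i, r i = 0) :
    Real.sqrt (∑ i, (r i - p i / n) ^ 2) ≤
      Real.sqrt (∑ i, p i ^ 2) * ((n - lam2) / (n * lam2)) :=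
  stmt18_general n G hconn M hM lam2 hlam2 hlam2n heig p r hr hrsum
end
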